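/- Suppose θ = 1, ρ = σ = c with c ∈ (0, 2), and rs‖ℒ‖² < 1. Then the operator G on W = H × H, given by G(u, p) = ((1/r)u − ℒ*p, −ℒu + (1/s)p), is self-adjoint; the operators K = G∘D⁻¹ = (1/c)G and N = G + G* − D*∘K∘D = (2 − c)G are self-adjoint; and there exist constants c₁ > 0 and c₂ > 0 such that ⟨Kw, w⟩ ≥ c₁‖w‖² and ⟨Nw, w⟩ ≥ c₂‖w‖² for all w ∈ W. -/

import Mathlib

open scoped InnerProductSpace RealInnerProductSpace

noncomputable section

/-- The product space `W = H × H` equipped with the Hilbert space structure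
`⟨(u,p),(u',p')⟩ = ⟨u,u'⟩ + ⟨p,p'⟩`. -/
abbrev W (H : Type*) [NormedAddCommGroup H] [InnerProductSpace ℝ H] := WithLp 2 (H × H)

/-- The canonical (linear homeomorphism) identification of `W` with the plain product. -/
def eW (H : Type*) [NormedAddCommGroup H] [InnerProductSpace ℝ H] :
    W H ≃L[ℝ] H × H := WithLp.prodContinuousLinearEquiv 2 ℝ H H

variable {H : Type*} [NormedAddCommGroup H] [InnerProductSpace ℝ H] [CompleteSpace H]

/-- The block diagonal operator `D(u,p) = (ρu, σp)` on `W`. -/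
def opD (H : Type*) [NormedAddCommGroup H] [InnerProductSpace ℝ H] (ρ σ : ℝ) :
    W H →L[ℝ] W H :=
  ((eW H).symm.toContinuousLinearMap.comp
    ((ρ • ContinuousLinearMap.fst ℝ H H).prod (σ • ContinuousLinearMap.snd ℝ H H))).comp
    (eW H).toContinuousLinearMap

/-- The block operator `G(u,p) = ((1/r)u − ℒ*p, −θℒu + (1/s)p)` on `W`. -/
def opG (L : H →L[ℝ] H) (r s θ : ℝ) : W H →L[ℝ] W H :=
  ((eW H).symm.toContinuousLinearMap.comp
    (((1 / r) • ContinuousLinearMap.fst ℝ H H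
        - (ContinuousLinearMap.adjoint L).comp (ContinuousLinearMap.snd ℝ H H)).prod
      ((-θ) • (L.comp (ContinuousLinearMap.fst ℝ H H))
        + (1 / s) • ContinuousLinearMap.snd ℝ H H))).comp
    (eW H).toContinuousLinearMap

/-- The operator `K = G ∘ D⁻¹`. -/
def opK (L : H →L[ℝ] H) (r s θ ρ σ : ℝ) : W H →L[ℝ] W H :=
  (opG L r s θ).comp (opD H ρ⁻¹ σ⁻¹)

/-- The operator `N = G + G* − D* ∘ K ∘ D`. -/
def opN (L : H →L[ℝ] H) (r s θ ρ σ : ℝ) : W H →L[ℝ] W H :=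
  opG L r s θ + ContinuousLinearMap.adjoint (opG L r s θ)
    - ((ContinuousLinearMap.adjoint (opD H ρ σ)).comp
        ((opK L r s θ ρ σ).comp (opD H ρ σ)))

/-- The map `F(u₀, p) = (τu₀ + ℒ*p, p − ℒu₀ + u_T)` on `W`. -/
def Fmap (L : H →L[ℝ] H) (uT : H) (τ : ℝ) : W H → W H := fun w =>
  (eW H).symm (τ • ((eW H) w).1 + ContinuousLinearMap.adjoint L ((eW H) w).2,
               ((eW H) w).2 - L ((eW H) w).1 + uT)

/-- `‖w‖²_A = ⟨Aw, w⟩` for an operator `A` on `W`. -/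
def normSq (A : W H →L[ℝ] W H) (w : W H) : ℝ := ⟪A w, w⟫_ℝ

/-- A saddle point `w* = (u₀*, p*)`: `φ(u₀) − φ(u₀*) + ⟨w − w*, F(w*)⟩ ≥ 0` for all `w`. -/
def IsSaddle (L : H →L[ℝ] H) (uT : H) (τ : ℝ) (φ : H → ℝ) (wstar : W H) : Prop :=
  ∀ w : W H, φ ((eW H w).1) - φ ((eW H wstar).1)
      + ⟪w - wstar, Fmap L uT τ wstar⟫_ℝ ≥ 0

/-- The prediction variational inequality satisfied by `w̃` given `wᵏ`:
`φ(u₀) − φ(ũ₀) + ⟨w − w̃, F(w̃) + G(w̃ − wᵏ)⟩ ≥ 0` for all `w`. -/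
def PredVI (L : H →L[ℝ] H) (uT : H) (τ : ℝ) (φ : H → ℝ) (r s θ : ℝ)
    (wk wt : W H) : Prop :=
  ∀ w : W H, φ ((eW H w).1) - φ ((eW H wt).1)
      + ⟪w - wt, Fmap L uT τ wt + opG L r s θ (wt - wk)⟫_ℝ ≥ 0

end

noncomputable section Aux
variable {H : Type*} [NormedAddCommGroup H] [InnerProductSpace ℝ H] [CompleteSpace H]

lemma opD_smul (a : ℝ) : opD H a a = a • (1 : W H →L[ℝ] W H) := by
  ext w
  show (WithLp.equiv 2 (H × H)).symm (a • _, a • _) = a • w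
  rfl

lemma opG_inner (L : H →L[ℝ] H) (r s θ : ℝ) (w w' : W H) :
    ⟪opG L r s θ w, w'⟫_ℝ = (1/r) * ⟪w.fst, w'.fst⟫_ℝ - ⟪L w'.fst, w.snd⟫_ℝ
      - θ * ⟪L w.fst, w'.snd⟫_ℝ + (1/s) * ⟪w.snd, w'.snd⟫_ℝ := by
  simp [opG, eW, WithLp.prod_inner_apply, inner_sub_left, inner_add_left, inner_smul_left,
    ContinuousLinearMap.adjoint_inner_left, real_inner_comm]
  ring

lemma opG_selfAdjoint (L : H →L[ℝ] H) (r s : ℝ) : IsSelfAdjoint (opG L r s 1 (H := H)) := by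
  rw [ContinuousLinearMap.isSelfAdjoint_iff_isSymmetric]
  intro x y
  show ⟪opG L r s 1 x, y⟫_ℝ = ⟪x, opG L r s 1 y⟫_ℝ
  rw [real_inner_comm (opG L r s 1 y) x, opG_inner, opG_inner,
    real_inner_comm x.fst y.fst, real_inner_comm x.snd y.snd]
  ring

lemma opG_coercive (L : H →L[ℝ] H) (r s : ℝ) (hr : 0 < r) (hs : 0 < s)
    (hrs : r * s * ‖L‖ ^ 2 < 1) :
    ∃ ε > (0 : ℝ), ∀ w : W H, ⟪opG L r s 1 w, w⟫_ℝ ≥ ε * ‖w‖ ^ 2 := by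
  set a : ℝ := 1/r
  set b : ℝ := 1/s
  set m : ℝ := ‖L‖
  have hm : 0 ≤ m := norm_nonneg L
  have hab : m ^ 2 < a * b := by
    rw [div_mul_div_comm, lt_div_iff₀ (by positivity), one_mul]
    nlinarith
  have ha : 0 < a := by positivity
  have hb : 0 < b := by positivity
  set ε : ℝ := (a * b - m ^ 2) / (a + b) with hεdef
  have hε : 0 < ε := by
    apply div_pos <;> linarith
  have haε : 0 < a - ε := by
    have : a - ε = (a ^ 2 + m ^ 2) / (a + b) := by
      rw [hεdef, eq_div_iff (by positivity)]; field_simp; ring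
    rw [this]; positivity
  have hkey : (a - ε) * (b - ε) = m ^ 2 + ε ^ 2 := by
    have h1 : ε * (a + b) = a * b - m ^ 2 := by
      rw [hεdef, div_mul_cancel₀]; positivity
    nlinarith [h1]
  refine ⟨ε, hε, fun w => ?_⟩
  rw [opG_inner, WithLp.prod_norm_sq_eq_of_L2]
  set x : ℝ := ‖w.fst‖
  set y : ℝ := ‖w.snd‖
  have hx : 0 ≤ x := norm_nonneg _
  have hy : 0 ≤ y := norm_nonneg _
  have h1 : ⟪w.fst, w.fst⟫_ℝ = x ^ 2 := real_inner_self_eq_norm_sq w.fst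
  have h2 : ⟪w.snd, w.snd⟫_ℝ = y ^ 2 := real_inner_self_eq_norm_sq w.snd
  have h3 : ⟪L w.fst, w.snd⟫_ℝ ≤ m * x * y := by
    calc ⟪L w.fst, w.snd⟫_ℝ ≤ ‖L w.fst‖ * ‖w.snd‖ := real_inner_le_norm _ _
    _ ≤ (m * x) * y := by
        apply mul_le_mul_of_nonneg_right (L.le_opNorm w.fst) hy
    _ = m * x * y := by ring
  rw [h1, h2]
  have hq : (a - ε) * x ^ 2 - 2 * m * x * y + (b - ε) * y ^ 2 ≥ 0 := by
    nlinarith [sq_nonneg ((a - ε) * x - m * y), sq_nonneg y, mul_pos haε haε]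
  nlinarith [hq, h3]

end Aux

/-- With `θ = 1`, `ρ = σ = c ∈ (0,2)` and `rs‖ℒ‖² < 1`: `G` is self-adjoint,
`K = G∘D⁻¹ = (1/c)G` and `N = G + G* − D*KD = (2 − c)G` are self-adjoint, and `K` and `N`
are positive definite. -/
theorem opK_opN_selfAdjoint_posDef
    {H : Type*} [NormedAddCommGroup H] [InnerProductSpace ℝ H] [CompleteSpace H]
    (L : H →L[ℝ] H) (r s c : ℝ) (hr : 0 < r) (hs : 0 < s)
    (hc : c ∈ Set.Ioo (0 : ℝ) 2) (hrs : r * s * ‖L‖ ^ 2 < 1) :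
    IsSelfAdjoint (opG L r s 1) ∧
    opK L r s 1 c c = c⁻¹ • opG L r s 1 ∧
    opN L r s 1 c c = (2 - c) • opG L r s 1 ∧
    IsSelfAdjoint (opK L r s 1 c c) ∧
    IsSelfAdjoint (opN L r s 1 c c) ∧
    (∃ c₁ > (0 : ℝ), ∀ w : W H, ⟪opK L r s 1 c c w, w⟫_ℝ ≥ c₁ * ‖w‖ ^ 2) ∧
    (∃ c₂ > (0 : ℝ), ∀ w : W H, ⟪opN L r s 1 c c w, w⟫_ℝ ≥ c₂ * ‖w‖ ^ 2) := by
  obtain ⟨hc0, hc2⟩ := hc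
  have hcne : c ≠ 0 := ne_of_gt hc0
  have hG := opG_selfAdjoint L r s (H := H)
  have hGadj : ContinuousLinearMap.adjoint (opG L r s 1 (H := H)) = opG L r s 1 :=
    ContinuousLinearMap.isSelfAdjoint_iff'.mp hG
  have hK : opK L r s 1 c c (H := H) = c⁻¹ • opG L r s 1 := by
    rw [opK, opD_smul, ContinuousLinearMap.comp_smul, ContinuousLinearMap.one_def,
      ContinuousLinearMap.comp_id]
  have hsmul : ∀ (t : ℝ) (A : W H →L[ℝ] W H),
      ContinuousLinearMap.adjoint (t • A) = t • ContinuousLinearMap.adjoint A := fun t A => by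
    simp
  have hDadj : ContinuousLinearMap.adjoint (opD H c c) = opD H c c := by
    rw [opD_smul, hsmul, ContinuousLinearMap.one_def, ContinuousLinearMap.adjoint_id]
  have hN : opN L r s 1 c c (H := H) = (2 - c) • opG L r s 1 := by
    rw [opN, hK, hGadj, hDadj, opD_smul]
    simp only [ContinuousLinearMap.smul_comp, ContinuousLinearMap.comp_smul,
      ContinuousLinearMap.one_def, ContinuousLinearMap.comp_id, ContinuousLinearMap.id_comp,
      smul_smul]
    have : c * c⁻¹ * c = c := by field_simp
    rw [this]
    ext w
    simp [sub_smul, two_smul]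
  obtain ⟨ε, hε, hcoer⟩ := opG_coercive L r s hr hs hrs
  refine ⟨hG, hK, hN, ?_, ?_, ?_, ?_⟩
  · rw [hK, ContinuousLinearMap.isSelfAdjoint_iff', hsmul, hGadj]
  · rw [hN, ContinuousLinearMap.isSelfAdjoint_iff', hsmul, hGadj]
  · refine ⟨c⁻¹ * ε, by positivity, fun w => ?_⟩
    rw [hK]
    have := hcoer w
    rw [ContinuousLinearMap.smul_apply, real_inner_smul_left]
    have hci : 0 < c⁻¹ := by positivity
    calc c⁻¹ * ⟪opG L r s 1 w, w⟫_ℝ ≥ c⁻¹ * (ε * ‖w‖ ^ 2) := by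
          exact mul_le_mul_of_nonneg_left this (le_of_lt hci)
    _ = c⁻¹ * ε * ‖w‖ ^ 2 := by ring
  · refine ⟨(2 - c) * ε, by nlinarith, fun w => ?_⟩
    rw [hN]
    have := hcoer w
    rw [ContinuousLinearMap.smul_apply, real_inner_smul_left]
    have h2c : 0 < 2 - c := by linarith
    calc (2 - c) * ⟪opG L r s 1 w, w⟫_ℝ ≥ (2 - c) * (ε * ‖w‖ ^ 2) := by
          exact mul_le_mul_of_nonneg_left this (le_of_lt h2c)
    _ = (2 - c) * ε * ‖w‖ ^ 2 := by ring
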